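/- Let G = {*x₁,…,*xₙ}:1 be a mutant flower of positive height. Then, with ↑ denoting up = {0 | *} and ⇑ = ↑ + ↑, the game ({*x₁,…,*xₙ}:(−1)) + ⇑ + *N is strictly positive in normal play for all sufficiently large N (N greater than all xᵢ and than mex{xᵢ}); that is, Left wins it regardless of who moves first. -/

import Mathlib

universe v

/-! `SetTheory.PGame`, `nim`, `star`, `Subsequent` and `Nimber` are no longer in Mathlib;
they are redefined here with their old (Mathlib, December 2024) meaning. -/

/-- Pre-games (as in old Mathlib `SetTheory.PGame`). -/
inductive SetTheory.PGame : Type (v + 1)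
  | mk : ∀ α β : Type v, (α → SetTheory.PGame) → (β → SetTheory.PGame) → SetTheory.PGame

namespace SetTheory

namespace PGame

/-- The indexing type for Left moves. -/
def LeftMoves : PGame.{v} → Type v
  | mk l _ _ _ => l

/-- The indexing type for Right moves. -/
def RightMoves : PGame.{v} → Type v
  | mk _ r _ _ => r

/-- The new game after Left makes an allowed move. -/
def moveLeft : ∀ g : PGame.{v}, LeftMoves g → PGame.{v}
  | mk _l _ L _ => L

/-- The new game after Right makes an allowed move. -/
def moveRight : ∀ g : PGame.{v}, RightMoves g → PGame.{v}
  | mk _ _r _ R => R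

/-- `IsOption x y` means `x` is a Left or Right option of `y`. -/
inductive IsOption : PGame.{v} → PGame.{v} → Prop
  | moveLeft {x : PGame.{v}} (i : x.LeftMoves) : IsOption (x.moveLeft i) x
  | moveRight {x : PGame.{v}} (i : x.RightMoves) : IsOption (x.moveRight i) x

theorem wf_isOption : WellFounded IsOption.{v} := by
  refine ⟨fun x => ?_⟩
  induction x with
  | mk l r L R IHl IHr =>
    refine Acc.intro _ fun y h => ?_
    cases h with
    | moveLeft i => exact IHl i
    | moveRight j => exact IHr j

/-- `Subsequent x y` : `x` can be reached from `y` by a nonempty sequence of moves. -/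
def Subsequent : PGame.{v} → PGame.{v} → Prop :=
  Relation.TransGen IsOption

theorem wf_subsequent : WellFounded Subsequent.{v} :=
  wf_isOption.transGen

instance : WellFoundedRelation PGame.{v} :=
  ⟨Subsequent, wf_subsequent⟩

theorem Subsequent.moveLeft (x : PGame.{v}) (i : x.LeftMoves) : Subsequent (x.moveLeft i) x :=
  Relation.TransGen.single (IsOption.moveLeft i)

theorem Subsequent.moveRight (x : PGame.{v}) (j : x.RightMoves) :
    Subsequent (x.moveRight j) x :=
  Relation.TransGen.single (IsOption.moveRight j)

/-- The less or equal relation (first component) and less or fuzzy relation (second). -/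
def leLF : PGame.{v} → PGame.{v} → Prop × Prop
  | mk xl xr xL xR, mk yl yr yL yR =>
    ((∀ i, (leLF (xL i) (mk yl yr yL yR)).2) ∧ ∀ j, (leLF (mk xl xr xL xR) (yR j)).2,
      (∃ i, (leLF (mk xl xr xL xR) (yL i)).1) ∨ ∃ j, (leLF (xR j) (mk yl yr yL yR)).1)
termination_by x y => (x, y)
decreasing_by
  all_goals first
    | exact Prod.Lex.left _ _ (Subsequent.moveLeft (mk xl xr xL xR) _)
    | exact Prod.Lex.left _ _ (Subsequent.moveRight (mk xl xr xL xR) _)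
    | exact Prod.Lex.right _ (Subsequent.moveLeft (mk yl yr yL yR) _)
    | exact Prod.Lex.right _ (Subsequent.moveRight (mk yl yr yL yR) _)

instance : LE PGame.{v} :=
  ⟨fun x y => (leLF x y).1⟩

/-- As in old Mathlib, `x < y` iff `x ≤ y` and `x ⧏ y`, i.e. `x ≤ y` and not `y ≤ x`. -/
instance : LT PGame.{v} :=
  ⟨fun x y => x ≤ y ∧ ¬ y ≤ x⟩

instance : Zero PGame.{v} :=
  ⟨⟨PEmpty, PEmpty, PEmpty.elim, PEmpty.elim⟩⟩

instance : One PGame.{v} :=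
  ⟨⟨PUnit, PEmpty, fun _ => 0, PEmpty.elim⟩⟩

/-- The negation of a pre-game. -/
def neg : PGame.{v} → PGame.{v}
  | ⟨l, r, L, R⟩ => ⟨r, l, fun i => neg (R i), fun i => neg (L i)⟩

instance : Neg PGame.{v} :=
  ⟨neg⟩

/-- The sum of pre-games. -/
def add : PGame.{v} → PGame.{v} → PGame.{v}
  | mk xl xr xL xR, mk yl yr yL yR =>
    mk (xl ⊕ yl) (xr ⊕ yr)
      (Sum.elim (fun i => add (xL i) (mk yl yr yL yR)) fun i => add (mk xl xr xL xR) (yL i))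
      (Sum.elim (fun i => add (xR i) (mk yl yr yL yR)) fun i => add (mk xl xr xL xR) (yR i))
termination_by x y => (x, y)
decreasing_by
  all_goals first
    | exact Prod.Lex.left _ _ (Subsequent.moveLeft (mk xl xr xL xR) _)
    | exact Prod.Lex.left _ _ (Subsequent.moveRight (mk xl xr xL xR) _)
    | exact Prod.Lex.right _ (Subsequent.moveLeft (mk yl yr yL yR) _)
    | exact Prod.Lex.right _ (Subsequent.moveRight (mk yl yr yL yR) _)

instance : Add PGame.{v} :=
  ⟨add⟩

instance : Sub PGame.{v} :=
  ⟨fun x y => x + -y⟩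

/-- The pre-game `star = {0 | 0}`. -/
def star : PGame.{v} :=
  ⟨PUnit, PUnit, fun _ => 0, fun _ => 0⟩

/-- The nim-heap `nim o`, whose options are `nim o'` for `o' < o`. -/
noncomputable def nim (o : Ordinal.{v}) : PGame.{v} :=
  ⟨o.ToType, o.ToType,
    fun x => nim (Ordinal.ToType.mk.symm x).val,
    fun x => nim (Ordinal.ToType.mk.symm x).val⟩
termination_by o
decreasing_by all_goals exact (Ordinal.ToType.mk.symm x).2

end PGame

end SetTheory

/-- Nimbers (as in old Mathlib): a type synonym for ordinals with the ordinal order. -/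
def Nimber : Type (v + 1) :=
  Ordinal.{v}

noncomputable instance : ConditionallyCompleteLinearOrderBot Nimber.{v} :=
  inferInstanceAs (ConditionallyCompleteLinearOrderBot Ordinal.{v})

instance : One Nimber.{v} :=
  ⟨(1 : Ordinal.{v})⟩

open SetTheory PGame

universe u

/-- The four outcome classes of a combinatorial game. -/
inductive Outcome : Type
  | L | N | P | R
deriving DecidableEq

/-- The partial order on outcomes: `R` least, `L` greatest, `N` and `P` incomparable. -/
def Outcome.leB : Outcome → Outcome → Bool
  | .R, _ => true
  | _, .L => true
  | .N, .N => true
  | .P, .P => true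
  | _, _ => false

instance : PartialOrder Outcome where
  le a b := Outcome.leB a b = true
  le_refl a := by cases a <;> rfl
  le_trans a b c := by cases a <;> cases b <;> cases c <;> simp [Outcome.leB]
  le_antisymm a b := by cases a <;> cases b <;> simp [Outcome.leB]

/-- `misereWins true G` : Left, moving first, wins `G` under misère play;
`misereWins false G` : Right, moving first, wins `G` under misère play.
(Under misère play, a player who cannot move wins.) -/
def misereWins : Bool → SetTheory.PGame.{u} → Prop
  | true, G => IsEmpty G.LeftMoves ∨ ∃ i, ¬ misereWins false (G.moveLeft i)
  | false, G => IsEmpty G.RightMoves ∨ ∃ j, ¬ misereWins true (G.moveRight j)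
termination_by _ G => G
decreasing_by
  all_goals first
    | exact Subsequent.moveLeft _ _
    | exact Subsequent.moveRight _ _

/-- Build an outcome class from the propositions "Left moving first wins" and
"Right moving first wins". -/
noncomputable def outcomeOf (LF RF : Prop) : Outcome := by
  classical exact if LF then (if RF then .N else .L) else (if RF then .R else .P)

/-- The normal-play outcome `o⁺(G)` of a game. -/
noncomputable def normalOutcome (G : PGame) : Outcome :=
  outcomeOf (¬ G ≤ 0) (¬ 0 ≤ G)

/-- The misère-play outcome `o⁻(G)` of a game. -/
noncomputable def misereOutcome (G : PGame) : Outcome :=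
  outcomeOf (misereWins true G) (misereWins false G)

/-- The ordinal sum `G : H` of two games: either move in `G` (destroying the `H` part),
or move in `H` keeping the base `G`. -/
def ordinalSum (G : PGame.{u}) : PGame.{u} → PGame.{u}
  | H => PGame.mk (G.LeftMoves ⊕ H.LeftMoves) (G.RightMoves ⊕ H.RightMoves)
      (Sum.elim G.moveLeft fun i => ordinalSum G (H.moveLeft i))
      (Sum.elim G.moveRight fun j => ordinalSum G (H.moveRight j))
termination_by H => H
decreasing_by
  all_goals first
    | exact Subsequent.moveLeft _ _
    | exact Subsequent.moveRight _ _

/-- The game `↑` (up) `= {0 | *}`. -/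
def up : PGame.{u} := ⟨PUnit, PUnit, fun _ => 0, fun _ => star⟩

/-- `n` copies of `↑` added together. -/
def nUp : ℕ → PGame.{u}
  | 0 => 0
  | n + 1 => nUp n + up

/-- The integer multiple `w·↑`. -/
def upMul : ℤ → PGame.{u}
  | .ofNat k => nUp k
  | .negSucc k => -(nUp (k + 1))

/-- Finite disjunctive sum of a family of games. -/
def psum : {k : ℕ} → (Fin k → PGame.{u}) → PGame.{u}
  | 0, _ => 0
  | k + 1, f => psum (fun i : Fin k => f i.castSucc) + f (Fin.last k)

/-- The superstar `{*x₁, …, *xₙ}`: the impartial game whose Left and Right options are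
exactly the nimbers `*xᵢ`. -/
noncomputable def superstar {n : ℕ} (x : Fin n → ℕ) : PGame :=
  ⟨Fin n, Fin n, fun i => nim (x i), fun i => nim (x i)⟩

/-- The minimum excludant of a set of naturals. -/
noncomputable def setMex (S : Set ℕ) : ℕ := sInf {n | n ∉ S}

/-- Iterated XOR (nim-sum) of a finite family of naturals. -/
def xorSum : {k : ℕ} → (Fin k → ℕ) → ℕ
  | 0, _ => 0
  | k + 1, f => xorSum (fun i : Fin k => f i.castSucc) ^^^ f (Fin.last k)

/-- A set of naturals is star-closed if it is closed under XOR with 1. -/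
def StarClosedN (S : Set ℕ) : Prop := ∀ a ∈ S, a ^^^ 1 ∈ S

/-- `G` is all-small (dicotic): in every subposition, either both players can move
or neither can. -/
def AllSmall (G : PGame) : Prop :=
  (Nonempty G.LeftMoves ↔ Nonempty G.RightMoves) ∧
    ∀ p, Subsequent p G → (Nonempty p.LeftMoves ↔ Nonempty p.RightMoves)

/-- `G` has (integer) atomic weight `w`, via the remote-star characterization:
for all sufficiently remote `N`, `*N + ↓ < G - w·↑ < *N + ↑`. -/
def HasIntAtomicWeight (G : PGame) (w : ℤ) : Prop :=
  ∃ N₀ : ℕ, ∀ N : ℕ, N₀ ≤ N →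
    nim N + (-up) < G - upMul w ∧ G - upMul w < nim N + up

open Classical in
/-- The misère Grundy value of an (impartial) game: the mex of the misère Grundy values
of its options, except that the empty game has misère Grundy value `1`. -/
noncomputable def misereGrundy : PGame.{u} → Nimber.{u}
  | G =>
    if IsEmpty G.LeftMoves then 1
    else sInf (Set.range fun i => misereGrundy (G.moveLeft i))ᶜ
termination_by G => G
decreasing_by
  all_goals first
    | exact Subsequent.moveLeft _ _
    | exact Subsequent.moveRight _ _

/-- A set of games closed under disjunctive sum and under taking subpositions. -/
def SClosed (A : Set PGame) : Prop :=
  (∀ G ∈ A, ∀ H ∈ A, G + H ∈ A) ∧ ∀ G ∈ A, ∀ G', Subsequent G' G → G' ∈ A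

/-- `K` is an evil kernel of `A`: setting `G* = G` for `G ∈ K` and `G* = G + *` otherwise,
one has `o⁺(G) = o⁻(G*)` and `o⁻(G) = o⁺(G*)` for all `G ∈ A`. -/
def IsEvilKernel (A K : Set PGame) : Prop :=
  K ⊆ A ∧ ∀ G ∈ A,
    (G ∈ K → normalOutcome G = misereOutcome G ∧ misereOutcome G = normalOutcome G) ∧
    (G ∉ K → normalOutcome G = misereOutcome (G + star) ∧
      misereOutcome G = normalOutcome (G + star))

/-- `(A, K)` is evilly normal: `A` is closed, `K` is an evil kernel of `A`, and
`G + H ∉ K ↔ (G ∉ K ∧ H ∉ K)` for all `G, H ∈ A`. -/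
def EvillyNormal (A K : Set PGame) : Prop :=
  SClosed A ∧ IsEvilKernel A K ∧ ∀ G ∈ A, ∀ H ∈ A, (G + H ∉ K ↔ G ∉ K ∧ H ∉ K)

/-- Normal-play equality of games: `G` and `H` have the same normal-play outcome in
every sum. -/
def NormalEq (G H : PGame) : Prop := ∀ X, normalOutcome (G + X) = normalOutcome (H + X)


section PGHelpers

theorem pg_leLF_mk (xl xr : Type v) (xL : xl → PGame.{v}) (xR : xr → PGame.{v}) (yl yr : Type v)
    (yL : yl → PGame.{v}) (yR : yr → PGame.{v}) :
    leLF (mk xl xr xL xR) (mk yl yr yL yR) =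
      (((∀ i, (leLF (xL i) (mk yl yr yL yR)).2) ∧ ∀ j, (leLF (mk xl xr xL xR) (yR j)).2),
        ((∃ i, (leLF (mk xl xr xL xR) (yL i)).1) ∨ ∃ j, (leLF (xR j) (mk yl yr yL yR)).1)) := by
  rw [leLF]

theorem pg_leLF_snd_aux (x : PGame.{v}) : ∀ y : PGame.{v},
    ((leLF x y).2 ↔ ¬ (leLF y x).1) ∧ ((leLF y x).2 ↔ ¬ (leLF x y).1) := by
  induction x with
  | mk xl xr xL xR ihxl ihxr =>
    intro y
    induction y with
    | mk yl yr yL yR ihyl ihyr =>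
      have h1 : ∀ i, (leLF (yL i) (mk xl xr xL xR)).2 ↔ ¬ (leLF (mk xl xr xL xR) (yL i)).1 :=
        fun i => (ihyl i).2
      have h2 : ∀ j, (leLF (mk yl yr yL yR) (xR j)).2 ↔ ¬ (leLF (xR j) (mk yl yr yL yR)).1 :=
        fun j => (ihxr j _).2
      have h3 : ∀ i, (leLF (xL i) (mk yl yr yL yR)).2 ↔ ¬ (leLF (mk yl yr yL yR) (xL i)).1 :=
        fun i => (ihxl i _).1
      have h4 : ∀ j, (leLF (mk xl xr xL xR) (yR j)).2 ↔ ¬ (leLF (yR j) (mk xl xr xL xR)).1 :=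
        fun j => (ihyr j).1
      rw [pg_leLF_mk, pg_leLF_mk]
      simp only [h1, h2, h3, h4, not_and_or, not_forall, not_not, iff_self, and_self]

theorem pg_leLF_snd (x y : PGame.{v}) : (leLF x y).2 ↔ ¬ (leLF y x).1 := (pg_leLF_snd_aux x y).1

theorem pg_le_iff {x y : PGame.{v}} :
    x ≤ y ↔ (∀ i, ¬ y ≤ x.moveLeft i) ∧ ∀ j, ¬ y.moveRight j ≤ x := by
  obtain ⟨xl, xr, xL, xR⟩ := x
  obtain ⟨yl, yr, yL, yR⟩ := y
  show (leLF _ _).1 ↔ (∀ i, ¬ (leLF _ (xL i)).1) ∧ ∀ j, ¬ (leLF (yR j) _).1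
  rw [pg_leLF_mk]
  simp only [pg_leLF_snd]

theorem pg_not_le_iff {x y : PGame.{v}} :
    ¬ y ≤ x ↔ (∃ i, x ≤ y.moveLeft i) ∨ ∃ j, x.moveRight j ≤ y := by
  rw [pg_le_iff]
  simp only [not_and_or, not_forall, not_not]

theorem pg_le_refl (x : PGame.{v}) : x ≤ x := by
  induction x with
  | mk xl xr xL xR ihl ihr =>
    exact pg_le_iff.2 ⟨fun i => pg_not_le_iff.2 (Or.inl ⟨i, ihl i⟩),
      fun j => pg_not_le_iff.2 (Or.inr ⟨j, ihr j⟩)⟩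

theorem pg_le_of_moves {x y : PGame.{v}} (hL : ∀ i, ∃ i', x.moveLeft i ≤ y.moveLeft i')
    (hR : ∀ j, ∃ j', x.moveRight j' ≤ y.moveRight j) : x ≤ y :=
  pg_le_iff.2 ⟨fun i => pg_not_le_iff.2 (Or.inl (hL i)), fun j => pg_not_le_iff.2 (Or.inr (hR j))⟩

theorem pg_trans_step {x y z : PGame.{v}}
    (h1 : ∀ i, y ≤ z → z ≤ x.moveLeft i → y ≤ x.moveLeft i)
    (h2 : ∀ j, z.moveRight j ≤ x → x ≤ y → z.moveRight j ≤ y)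
    (hxy : x ≤ y) (hyz : y ≤ z) : x ≤ z := by
  have a := pg_le_iff.1 hxy
  have b := pg_le_iff.1 hyz
  exact pg_le_iff.2 ⟨fun i h => a.1 i (h1 i hyz h), fun j h => b.2 j (h2 j h hxy)⟩

theorem pg_le_trans_aux (x : PGame.{v}) : ∀ y z : PGame.{v},
    (x ≤ y → y ≤ z → x ≤ z) ∧ (y ≤ z → z ≤ x → y ≤ x) ∧ (z ≤ x → x ≤ y → z ≤ y) := by
  induction x with
  | mk xl xr xL xR ihxl ihxr =>
    intro y
    induction y with
    | mk yl yr yL yR ihyl ihyr =>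
      intro z
      induction z with
      | mk zl zr zL zR ihzl ihzr =>
        exact ⟨pg_trans_step (fun i => (ihxl i _ _).2.1) (fun j => (ihzr j).2.2),
          pg_trans_step (fun i => (ihyl i _).2.2) (fun j => (ihxr j _ _).1),
          pg_trans_step (fun i => (ihzl i).1) (fun j => (ihyr j _).2.1)⟩

theorem pg_le_trans {x y z : PGame.{v}} (h1 : x ≤ y) (h2 : y ≤ z) : x ≤ z :=
  (pg_le_trans_aux x y z).1 h1 h2

def PGEq (x y : PGame.{v}) : Prop := x ≤ y ∧ y ≤ x

theorem pg_eq_refl (x : PGame.{v}) : PGEq x x := ⟨pg_le_refl x, pg_le_refl x⟩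

theorem pg_eq_trans {x y z : PGame.{v}} (h1 : PGEq x y) (h2 : PGEq y z) : PGEq x z :=
  ⟨pg_le_trans h1.1 h2.1, pg_le_trans h2.2 h1.2⟩

theorem pg_le_congr {a a' b b' : PGame.{v}} (ha : PGEq a a') (hb : PGEq b b') : a ≤ b ↔ a' ≤ b' :=
  ⟨fun h => pg_le_trans ha.2 (pg_le_trans h hb.1), fun h => pg_le_trans ha.1 (pg_le_trans h hb.2)⟩

def pgUpL : up.{v}.LeftMoves := PUnit.unit

def pgAddMk (x y : PGame.{v}) : PGame.{v} :=
  mk (x.LeftMoves ⊕ y.LeftMoves) (x.RightMoves ⊕ y.RightMoves)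
    (Sum.elim (fun i => x.moveLeft i + y) fun i => x + y.moveLeft i)
    (Sum.elim (fun i => x.moveRight i + y) fun i => x + y.moveRight i)

theorem pg_add_eq (x y : PGame.{v}) : x + y = pgAddMk x y := by
  obtain ⟨xl, xr, xL, xR⟩ := x
  obtain ⟨yl, yr, yL, yR⟩ := y
  show add _ _ = _
  rw [add]
  rfl

def pgToL {x y : PGame.{v}} : x.LeftMoves ⊕ y.LeftMoves ≃ (x + y).LeftMoves :=
  Equiv.cast (congrArg LeftMoves (pg_add_eq x y).symm)

def pgToR {x y : PGame.{v}} : x.RightMoves ⊕ y.RightMoves ≃ (x + y).RightMoves :=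
  Equiv.cast (congrArg RightMoves (pg_add_eq x y).symm)

theorem pg_addL_inl {x y : PGame.{v}} (i : x.LeftMoves) :
    (x + y).moveLeft (pgToL (Sum.inl i)) = x.moveLeft i + y := by
  have key : ∀ (g : PGame.{v}) (h : pgAddMk x y = g),
      g.moveLeft (Equiv.cast (congrArg LeftMoves h) (Sum.inl i)) = x.moveLeft i + y := by
    rintro g rfl; rfl
  exact key _ (pg_add_eq x y).symm

theorem pg_addL_inr {x y : PGame.{v}} (i : y.LeftMoves) :
    (x + y).moveLeft (pgToL (Sum.inr i)) = x + y.moveLeft i := by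
  have key : ∀ (g : PGame.{v}) (h : pgAddMk x y = g),
      g.moveLeft (Equiv.cast (congrArg LeftMoves h) (Sum.inr i)) = x + y.moveLeft i := by
    rintro g rfl; rfl
  exact key _ (pg_add_eq x y).symm

theorem pg_addR_inl {x y : PGame.{v}} (i : x.RightMoves) :
    (x + y).moveRight (pgToR (Sum.inl i)) = x.moveRight i + y := by
  have key : ∀ (g : PGame.{v}) (h : pgAddMk x y = g),
      g.moveRight (Equiv.cast (congrArg RightMoves h) (Sum.inl i)) = x.moveRight i + y := by
    rintro g rfl; rfl
  exact key _ (pg_add_eq x y).symm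

theorem pg_addR_inr {x y : PGame.{v}} (i : y.RightMoves) :
    (x + y).moveRight (pgToR (Sum.inr i)) = x + y.moveRight i := by
  have key : ∀ (g : PGame.{v}) (h : pgAddMk x y = g),
      g.moveRight (Equiv.cast (congrArg RightMoves h) (Sum.inr i)) = x + y.moveRight i := by
    rintro g rfl; rfl
  exact key _ (pg_add_eq x y).symm

@[elab_as_elim]
theorem pg_leftMoves_add_cases {x y : PGame.{v}} (k : (x + y).LeftMoves)
    {P : (x + y).LeftMoves → Prop} (hl : ∀ i, P (pgToL (Sum.inl i)))
    (hr : ∀ i, P (pgToL (Sum.inr i))) : P k := by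
  rw [← pgToL.apply_symm_apply k]
  generalize pgToL.symm k = s
  rcases s with i | i
  exacts [hl i, hr i]

@[elab_as_elim]
theorem pg_rightMoves_add_cases {x y : PGame.{v}} (k : (x + y).RightMoves)
    {P : (x + y).RightMoves → Prop} (hl : ∀ i, P (pgToR (Sum.inl i)))
    (hr : ∀ i, P (pgToR (Sum.inr i))) : P k := by
  rw [← pgToR.apply_symm_apply k]
  generalize pgToR.symm k = s
  rcases s with i | i
  exacts [hl i, hr i]

theorem pg_add_comm_le (x : PGame.{v}) : ∀ y : PGame.{v}, x + y ≤ y + x := by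
  induction x with
  | mk xl xr xL xR ihxl ihxr =>
    intro y
    induction y with
    | mk yl yr yL yR ihyl ihyr =>
      refine pg_le_of_moves (fun i => ?_) (fun j => ?_)
      · refine pg_leftMoves_add_cases i (fun i => ?_) (fun i => ?_)
        · exact ⟨pgToL (Sum.inr i), by
            simp only [pg_addL_inl, pg_addL_inr]; exact ihxl i _⟩
        · exact ⟨pgToL (Sum.inl i), by
            simp only [pg_addL_inl, pg_addL_inr]; exact ihyl i⟩
      · refine pg_rightMoves_add_cases j (fun j => ?_) (fun j => ?_)
        · exact ⟨pgToR (Sum.inr j), by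
            simp only [pg_addR_inl, pg_addR_inr]; exact ihyr j⟩
        · exact ⟨pgToR (Sum.inl j), by
            simp only [pg_addR_inl, pg_addR_inr]; exact ihxr j _⟩

theorem pg_add_comm (x y : PGame.{v}) : PGEq (x + y) (y + x) :=
  ⟨pg_add_comm_le x y, pg_add_comm_le y x⟩

theorem pg_zero_add (x : PGame.{v}) : PGEq (0 + x) x := by
  induction x with
  | mk xl xr xL xR ihl ihr =>
    constructor
    · refine pg_le_of_moves (fun i => ?_)
        (fun j => ⟨pgToR (Sum.inr j), by simp only [pg_addR_inr]; exact (ihr j).1⟩)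
      exact pg_leftMoves_add_cases i (fun i => PEmpty.elim i)
        (fun i => ⟨i, by simp only [pg_addL_inr]; exact (ihl i).1⟩)
    · refine pg_le_of_moves
        (fun i => ⟨pgToL (Sum.inr i), by simp only [pg_addL_inr]; exact (ihl i).2⟩) (fun j => ?_)
      exact pg_rightMoves_add_cases j (fun j => PEmpty.elim j)
        (fun j => ⟨j, by simp only [pg_addR_inr]; exact (ihr j).2⟩)

theorem pg_add_zero (x : PGame.{v}) : PGEq (x + 0) x :=
  pg_eq_trans (pg_add_comm x 0) (pg_zero_add x)

theorem pg_add_le_add_left (x : PGame.{v}) : ∀ y z : PGame.{v}, y ≤ z → x + y ≤ x + z := by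
  induction x with
  | mk xl xr xL xR ihl ihr =>
    intro y
    refine wf_subsequent.induction
      (C := fun y => ∀ z, y ≤ z → mk xl xr xL xR + y ≤ mk xl xr xL xR + z) y ?_
    intro y ihy z
    refine wf_subsequent.induction
      (C := fun z => y ≤ z → mk xl xr xL xR + y ≤ mk xl xr xL xR + z) z ?_
    intro z ihz h
    have hh := pg_le_iff.1 h
    refine pg_le_iff.2 ⟨fun i => ?_, fun j => ?_⟩
    · refine pg_leftMoves_add_cases i (fun i => ?_) (fun i => ?_)
      · simp only [pg_addL_inl]
        exact pg_not_le_iff.2 (Or.inl ⟨pgToL (Sum.inl i), by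
          simp only [pg_addL_inl]; exact ihl i _ _ h⟩)
      · simp only [pg_addL_inr]
        rcases pg_not_le_iff.1 (hh.1 i) with ⟨k, hk⟩ | ⟨j, hj⟩
        · exact pg_not_le_iff.2 (Or.inl ⟨pgToL (Sum.inr k), by
            simp only [pg_addL_inr]; exact ihy _ (Subsequent.moveLeft y i) _ hk⟩)
        · exact pg_not_le_iff.2 (Or.inr ⟨pgToR (Sum.inr j), by
            simp only [pg_addR_inr]
            exact ihy _ (Relation.TransGen.head (IsOption.moveRight j)
              (Subsequent.moveLeft y i)) _ hj⟩)
    · refine pg_rightMoves_add_cases j (fun j => ?_) (fun j => ?_)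
      · simp only [pg_addR_inl]
        exact pg_not_le_iff.2 (Or.inr ⟨pgToR (Sum.inl j), by
          simp only [pg_addR_inl]; exact ihr j _ _ h⟩)
      · simp only [pg_addR_inr]
        rcases pg_not_le_iff.1 (hh.2 j) with ⟨k, hk⟩ | ⟨j', hj⟩
        · exact pg_not_le_iff.2 (Or.inl ⟨pgToL (Sum.inr k), by
            simp only [pg_addL_inr]
            exact ihz _ (Relation.TransGen.head (IsOption.moveLeft k)
              (Subsequent.moveRight z j)) hk⟩)
        · exact pg_not_le_iff.2 (Or.inr ⟨pgToR (Sum.inr j'), by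
            simp only [pg_addR_inr]; exact ihy _ (Subsequent.moveRight y j') _ hj⟩)

theorem pg_add_le_add_right {x y z : PGame.{v}} (h : y ≤ z) : y + x ≤ z + x :=
  pg_le_trans (pg_add_comm_le y x) (pg_le_trans (pg_add_le_add_left x y z h) (pg_add_comm_le x z))

theorem pg_add_congr_left {a a' b : PGame.{v}} (h : PGEq a a') : PGEq (a + b) (a' + b) :=
  ⟨pg_add_le_add_right h.1, pg_add_le_add_right h.2⟩

theorem pg_add_congr_right {a b b' : PGame.{v}} (h : PGEq b b') : PGEq (a + b) (a + b') :=
  ⟨pg_add_le_add_left _ _ _ h.1, pg_add_le_add_left _ _ _ h.2⟩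

theorem pg_add_assoc_aux (x : PGame.{v}) : ∀ y z : PGame.{v},
    (x + y) + z ≤ x + (y + z) ∧ x + (y + z) ≤ (x + y) + z := by
  induction x with
  | mk xl xr xL xR ihxl ihxr =>
    intro y
    induction y with
    | mk yl yr yL yR ihyl ihyr =>
      intro z
      induction z with
      | mk zl zr zL zR ihzl ihzr =>
        constructor
        · refine pg_le_of_moves (fun i => ?_) (fun j => ?_)
          · refine pg_leftMoves_add_cases i (fun k => ?_) (fun k => ?_)
            · simp only [pg_addL_inl]
              refine pg_leftMoves_add_cases k (fun i => ?_) (fun i => ?_)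
              · exact ⟨pgToL (Sum.inl i), by
                  simp only [pg_addL_inl, pg_addL_inr]; exact (ihxl i _ _).1⟩
              · exact ⟨pgToL (Sum.inr (pgToL (Sum.inl i))), by
                  simp only [pg_addL_inl, pg_addL_inr]; exact (ihyl i _).1⟩
            · exact ⟨pgToL (Sum.inr (pgToL (Sum.inr k))), by
                simp only [pg_addL_inl, pg_addL_inr]; exact (ihzl k).1⟩
          · refine pg_rightMoves_add_cases j (fun i => ?_) (fun k => ?_)
            · exact ⟨pgToR (Sum.inl (pgToR (Sum.inl i))), by
                simp only [pg_addR_inl, pg_addR_inr]; exact (ihxr i _ _).1⟩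
            · simp only [pg_addR_inr]
              refine pg_rightMoves_add_cases k (fun i => ?_) (fun i => ?_)
              · exact ⟨pgToR (Sum.inl (pgToR (Sum.inr i))), by
                  simp only [pg_addR_inl, pg_addR_inr]; exact (ihyr i _).1⟩
              · exact ⟨pgToR (Sum.inr i), by
                  simp only [pg_addR_inl, pg_addR_inr]; exact (ihzr i).1⟩
        · refine pg_le_of_moves (fun i => ?_) (fun j => ?_)
          · refine pg_leftMoves_add_cases i (fun i => ?_) (fun k => ?_)
            · exact ⟨pgToL (Sum.inl (pgToL (Sum.inl i))), by
                simp only [pg_addL_inl, pg_addL_inr]; exact (ihxl i _ _).2⟩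
            · simp only [pg_addL_inr]
              refine pg_leftMoves_add_cases k (fun i => ?_) (fun i => ?_)
              · exact ⟨pgToL (Sum.inl (pgToL (Sum.inr i))), by
                  simp only [pg_addL_inl, pg_addL_inr]; exact (ihyl i _).2⟩
              · exact ⟨pgToL (Sum.inr i), by
                  simp only [pg_addL_inl, pg_addL_inr]; exact (ihzl i).2⟩
          · refine pg_rightMoves_add_cases j (fun k => ?_) (fun k => ?_)
            · simp only [pg_addR_inl]
              refine pg_rightMoves_add_cases k (fun i => ?_) (fun i => ?_)
              · exact ⟨pgToR (Sum.inl i), by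
                  simp only [pg_addR_inl, pg_addR_inr]; exact (ihxr i _ _).2⟩
              · exact ⟨pgToR (Sum.inr (pgToR (Sum.inl i))), by
                  simp only [pg_addR_inl, pg_addR_inr]; exact (ihyr i _).2⟩
            · exact ⟨pgToR (Sum.inr (pgToR (Sum.inr k))), by
                simp only [pg_addR_inl, pg_addR_inr]; exact (ihzr k).2⟩

theorem pg_add_assoc (x y z : PGame.{v}) : PGEq ((x + y) + z) (x + (y + z)) :=
  pg_add_assoc_aux x y z

theorem pg_nim_moveLeft_lt (o : Ordinal.{v}) (i : (nim o).LeftMoves) :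
    ∃ o' < o, (nim o).moveLeft i = nim o' := by
  have key : ∀ (g : PGame.{v}) (h : g = nim o) (i : g.LeftMoves),
      ∃ o' < o, g.moveLeft i = nim o' := by
    intro g h i
    rw [nim] at h
    subst h
    exact ⟨_, (Ordinal.ToType.mk.symm i).2, rfl⟩
  exact key _ rfl i

theorem pg_nim_moveRight_lt (o : Ordinal.{v}) (i : (nim o).RightMoves) :
    ∃ o' < o, (nim o).moveRight i = nim o' := by
  have key : ∀ (g : PGame.{v}) (h : g = nim o) (i : g.RightMoves),
      ∃ o' < o, g.moveRight i = nim o' := by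
    intro g h i
    rw [nim] at h
    subst h
    exact ⟨_, (Ordinal.ToType.mk.symm i).2, rfl⟩
  exact key _ rfl i

theorem pg_nim_moveLeft_exists {o o' : Ordinal.{v}} (h' : o' < o) :
    ∃ i, (nim o).moveLeft i = nim o' := by
  have key : ∀ (g : PGame.{v}) (h : g = nim o), ∃ i, g.moveLeft i = nim o' := by
    intro g h
    rw [nim] at h
    subst h
    exact ⟨Ordinal.ToType.mk (o := o) ⟨o', h'⟩, by
      show nim (Ordinal.ToType.mk.symm (Ordinal.ToType.mk (o := o) ⟨o', h'⟩)).val = nim o'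
      rw [OrderIso.symm_apply_apply]⟩
  exact key _ rfl

theorem pg_nim_moveRight_exists {o o' : Ordinal.{v}} (h' : o' < o) :
    ∃ i, (nim o).moveRight i = nim o' := by
  have key : ∀ (g : PGame.{v}) (h : g = nim o), ∃ i, g.moveRight i = nim o' := by
    intro g h
    rw [nim] at h
    subst h
    exact ⟨Ordinal.ToType.mk (o := o) ⟨o', h'⟩, by
      show nim (Ordinal.ToType.mk.symm (Ordinal.ToType.mk (o := o) ⟨o', h'⟩)).val = nim o'
      rw [OrderIso.symm_apply_apply]⟩
  exact key _ rfl

theorem pg_nat_of_lt_nat {o : Ordinal.{v}} {n : ℕ} (h : o < n) : ∃ k : ℕ, k < n ∧ o = k := by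
  obtain ⟨k, rfl⟩ := Ordinal.lt_omega0.1 (h.trans (Ordinal.natCast_lt_omega0 n))
  exact ⟨k, by exact_mod_cast h, rfl⟩

theorem pg_nimN_moveLeft (n : ℕ) (i : (nim.{v} n).LeftMoves) :
    ∃ k : ℕ, k < n ∧ (nim.{v} n).moveLeft i = nim k := by
  obtain ⟨o', ho', he⟩ := pg_nim_moveLeft_lt _ i
  obtain ⟨k, hk, rfl⟩ := pg_nat_of_lt_nat ho'
  exact ⟨k, hk, he⟩

theorem pg_nimN_moveRight (n : ℕ) (i : (nim.{v} n).RightMoves) :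
    ∃ k : ℕ, k < n ∧ (nim.{v} n).moveRight i = nim k := by
  obtain ⟨o', ho', he⟩ := pg_nim_moveRight_lt _ i
  obtain ⟨k, hk, rfl⟩ := pg_nat_of_lt_nat ho'
  exact ⟨k, hk, he⟩

theorem pg_nimN_moveLeft_exists {n k : ℕ} (h : k < n) : ∃ i, (nim.{v} n).moveLeft i = nim k :=
  pg_nim_moveLeft_exists (by exact_mod_cast h)

theorem pg_nimN_moveRight_exists {n k : ℕ} (h : k < n) : ∃ i, (nim.{v} n).moveRight i = nim k :=
  pg_nim_moveRight_exists (by exact_mod_cast h)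

theorem pg_nim_zero : PGEq (nim.{v} (0 : ℕ)) 0 := by
  constructor
  · exact pg_le_of_moves (fun i => by obtain ⟨k, hk, _⟩ := pg_nimN_moveLeft 0 i; omega)
      (fun j => PEmpty.elim j)
  · exact pg_le_of_moves (fun i => PEmpty.elim i)
      (fun j => by obtain ⟨k, hk, _⟩ := pg_nimN_moveRight 0 j; omega)

theorem pg_star_nim_one : PGEq star (nim.{v} (1 : ℕ)) := by
  obtain ⟨i0, hi0⟩ := pg_nimN_moveLeft_exists (show (0 : ℕ) < 1 by norm_num)
  obtain ⟨j0, hj0⟩ := pg_nimN_moveRight_exists (show (0 : ℕ) < 1 by norm_num)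
  have e0 := pg_nim_zero.{v}
  constructor
  · refine pg_le_of_moves (fun _ => ⟨i0, ?_⟩) (fun j => ⟨PUnit.unit, ?_⟩)
    · rw [hi0]; exact e0.2
    · obtain ⟨k, hk, he⟩ := pg_nimN_moveRight 1 j
      have : k = 0 := by omega
      subst this
      rw [he]; exact e0.2
  · refine pg_le_of_moves (fun i => ⟨PUnit.unit, ?_⟩) (fun _ => ⟨j0, ?_⟩)
    · obtain ⟨k, hk, he⟩ := pg_nimN_moveLeft 1 i
      have : k = 0 := by omega
      subst this
      rw [he]; exact e0.1
    · rw [hj0]; exact e0.1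

theorem pg_xor_lt_cases {a b c : ℕ} (h : c < a ^^^ b) :
    (∃ a' < a, a' ^^^ b = c) ∨ ∃ b' < b, a ^^^ b' = c := by
  rcases Nat.lt_xor_cases h with h1 | h1
  · exact Or.inl ⟨c ^^^ b, h1, by rw [Nat.xor_assoc, Nat.xor_self, Nat.xor_zero]⟩
  · exact Or.inr ⟨c ^^^ a, h1, by rw [Nat.xor_comm c a, ← Nat.xor_assoc, Nat.xor_self, Nat.zero_xor]⟩

theorem pg_xor_eq_iff {a b c : ℕ} : a ^^^ b = c ↔ b = a ^^^ c := by
  constructor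
  · rintro rfl; rw [← Nat.xor_assoc, Nat.xor_self, Nat.zero_xor]
  · rintro rfl; rw [← Nat.xor_assoc, Nat.xor_self, Nat.zero_xor]

theorem pg_xor_right_cancel {a a' b : ℕ} (h : a ^^^ b = a' ^^^ b) : a = a' := by
  rw [Nat.xor_comm a b, Nat.xor_comm a' b, pg_xor_eq_iff, ← Nat.xor_assoc, Nat.xor_self,
    Nat.zero_xor] at h
  exact h

theorem pg_xor_left_cancel {a b b' : ℕ} (h : a ^^^ b = a ^^^ b') : b = b' := by
  rw [pg_xor_eq_iff, ← Nat.xor_assoc, Nat.xor_self, Nat.zero_xor] at h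
  exact h

theorem pg_nim_add_nim_aux (m : ℕ) : ∀ a b : ℕ, a + b < m →
    PGEq (nim.{v} a + nim.{v} b) (nim.{v} ((a ^^^ b : ℕ) : Ordinal)) := by
  induction m with
  | zero => intro a b h; omega
  | succ m ih =>
    intro a b hab
    have IH : ∀ a' b' : ℕ, a' + b' < a + b →
        PGEq (nim.{v} a' + nim.{v} b') (nim.{v} ((a' ^^^ b' : ℕ) : Ordinal)) :=
      fun a' b' h => ih a' b' (by omega)
    have mv : ∀ a' b' : ℕ, a' + b' ≤ a + b → ∀ c, c < a' ^^^ b' →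
        (∃ i, PGEq ((nim.{v} a' + nim.{v} b').moveLeft i) (nim.{v} c)) ∧
          (∃ j, PGEq ((nim.{v} a' + nim.{v} b').moveRight j) (nim.{v} c)) := by
      intro a' b' hle c hc
      rcases pg_xor_lt_cases hc with ⟨a'', ha'', he⟩ | ⟨b'', hb'', he⟩
      · obtain ⟨i, hi⟩ := pg_nimN_moveLeft_exists ha''
        obtain ⟨j, hj⟩ := pg_nimN_moveRight_exists ha''
        have e := IH a'' b' (by omega)
        rw [he] at e
        exact ⟨⟨pgToL (Sum.inl i), by simp only [pg_addL_inl, hi]; exact e⟩,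
          ⟨pgToR (Sum.inl j), by simp only [pg_addR_inl, hj]; exact e⟩⟩
      · obtain ⟨i, hi⟩ := pg_nimN_moveLeft_exists hb''
        obtain ⟨j, hj⟩ := pg_nimN_moveRight_exists hb''
        have e := IH a' b'' (by omega)
        rw [he] at e
        exact ⟨⟨pgToL (Sum.inr i), by simp only [pg_addL_inr, hi]; exact e⟩,
          ⟨pgToR (Sum.inr j), by simp only [pg_addR_inr, hj]; exact e⟩⟩
    constructor
    · refine pg_le_iff.2 ⟨fun i => ?_, fun j => ?_⟩
      · refine pg_leftMoves_add_cases i (fun i => ?_) (fun i => ?_)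
        · obtain ⟨a', ha', he⟩ := pg_nimN_moveLeft a i
          simp only [pg_addL_inl, he]
          have hne : a' ^^^ b ≠ a ^^^ b := fun h => by have := pg_xor_right_cancel h; omega
          rcases lt_or_gt_of_ne hne with hlt | hgt
          · obtain ⟨i', hi'⟩ := pg_nimN_moveLeft_exists hlt
            exact pg_not_le_iff.2 (Or.inl ⟨i', by rw [hi']; exact (IH a' b (by omega)).1⟩)
          · obtain ⟨j', hj'⟩ := (mv a' b (by omega) _ hgt).2
            exact pg_not_le_iff.2 (Or.inr ⟨j', hj'.1⟩)
        · obtain ⟨b', hb', he⟩ := pg_nimN_moveLeft b i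
          simp only [pg_addL_inr, he]
          have hne : a ^^^ b' ≠ a ^^^ b := fun h => by have := pg_xor_left_cancel h; omega
          rcases lt_or_gt_of_ne hne with hlt | hgt
          · obtain ⟨i', hi'⟩ := pg_nimN_moveLeft_exists hlt
            exact pg_not_le_iff.2 (Or.inl ⟨i', by rw [hi']; exact (IH a b' (by omega)).1⟩)
          · obtain ⟨j', hj'⟩ := (mv a b' (by omega) _ hgt).2
            exact pg_not_le_iff.2 (Or.inr ⟨j', hj'.1⟩)
      · obtain ⟨c', hc', he⟩ := pg_nimN_moveRight (a ^^^ b) j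
        rw [he]
        obtain ⟨j', hj'⟩ := (mv a b le_rfl c' hc').2
        exact pg_not_le_iff.2 (Or.inr ⟨j', hj'.1⟩)
    · refine pg_le_iff.2 ⟨fun i => ?_, fun j => ?_⟩
      · obtain ⟨c', hc', he⟩ := pg_nimN_moveLeft (a ^^^ b) i
        rw [he]
        obtain ⟨i', hi'⟩ := (mv a b le_rfl c' hc').1
        exact pg_not_le_iff.2 (Or.inl ⟨i', hi'.2⟩)
      · refine pg_rightMoves_add_cases j (fun j => ?_) (fun j => ?_)
        · obtain ⟨a', ha', he⟩ := pg_nimN_moveRight a j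
          simp only [pg_addR_inl, he]
          have hne : a' ^^^ b ≠ a ^^^ b := fun h => by have := pg_xor_right_cancel h; omega
          rcases lt_or_gt_of_ne hne with hlt | hgt
          · obtain ⟨j', hj'⟩ := pg_nimN_moveRight_exists hlt
            exact pg_not_le_iff.2 (Or.inr ⟨j', by rw [hj']; exact (IH a' b (by omega)).2⟩)
          · obtain ⟨i', hi'⟩ := (mv a' b (by omega) _ hgt).1
            exact pg_not_le_iff.2 (Or.inl ⟨i', hi'.2⟩)
        · obtain ⟨b', hb', he⟩ := pg_nimN_moveRight b j
          simp only [pg_addR_inr, he]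
          have hne : a ^^^ b' ≠ a ^^^ b := fun h => by have := pg_xor_left_cancel h; omega
          rcases lt_or_gt_of_ne hne with hlt | hgt
          · obtain ⟨j', hj'⟩ := pg_nimN_moveRight_exists hlt
            exact pg_not_le_iff.2 (Or.inr ⟨j', by rw [hj']; exact (IH a b' (by omega)).2⟩)
          · obtain ⟨i', hi'⟩ := (mv a b' (by omega) _ hgt).1
            exact pg_not_le_iff.2 (Or.inl ⟨i', hi'.2⟩)

theorem pg_nim_add_nim (a b : ℕ) : PGEq (nim.{v} a + nim.{v} b) (nim.{v} ((a ^^^ b : ℕ) : Ordinal)) :=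
  pg_nim_add_nim_aux (a + b + 1) a b (by omega)

theorem pg_zero_le_iff {g : PGame.{v}} : 0 ≤ g ↔ ∀ j, ¬ g.moveRight j ≤ 0 := by
  rw [pg_le_iff]
  exact ⟨fun h => h.2, fun h => ⟨fun i => PEmpty.elim i, h⟩⟩

theorem pg_not_le_zero_iff {g : PGame.{v}} : ¬ g ≤ 0 ↔ ∃ i, 0 ≤ g.moveLeft i := by
  rw [pg_not_le_iff]
  exact ⟨fun h => h.elim id (fun ⟨j, _⟩ => PEmpty.elim j), Or.inl⟩

theorem pg_zero_le_up : (0 : PGame.{v}) ≤ up := by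
  rw [pg_zero_le_iff]
  intro j
  show ¬ star ≤ 0
  rw [pg_not_le_zero_iff]
  exact ⟨PUnit.unit, pg_le_refl 0⟩

theorem pg_up_add_nim_not_le (k : ℕ) : ¬ (up.{v} + nim.{v} k ≤ 0) := by
  rw [pg_not_le_zero_iff]
  rcases Nat.eq_zero_or_pos k with rfl | hk
  · refine ⟨pgToL (Sum.inl pgUpL), ?_⟩
    simp only [pg_addL_inl]
    exact pg_le_trans pg_nim_zero.2 (pg_zero_add _).2
  · obtain ⟨i, hi⟩ := pg_nimN_moveLeft_exists hk
    refine ⟨pgToL (Sum.inr i), ?_⟩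
    simp only [pg_addL_inr, hi]
    exact pg_le_trans pg_zero_le_up
      (pg_eq_trans (pg_add_congr_right pg_nim_zero) (pg_add_zero up)).2

theorem pg_nim_not_le_zero {m : ℕ} (hm : m ≠ 0) : ¬ (nim.{v} m ≤ 0) := by
  rw [pg_not_le_zero_iff]
  obtain ⟨i, hi⟩ := pg_nimN_moveLeft_exists (Nat.pos_of_ne_zero hm)
  exact ⟨i, by rw [hi]; exact pg_nim_zero.2⟩

theorem pg_star_add_nim (k : ℕ) : PGEq (star.{v} + nim k) (nim ((1 ^^^ k : ℕ) : Ordinal)) :=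
  pg_eq_trans (pg_add_congr_left pg_star_nim_one) (pg_nim_add_nim 1 k)

theorem pg_up_add_nim_nonneg {k : ℕ} (hk : k ≠ 1) : 0 ≤ up.{v} + nim.{v} k := by
  rw [pg_zero_le_iff]
  intro j
  refine pg_rightMoves_add_cases j (fun u => ?_) (fun j => ?_)
  · simp only [pg_addR_inl]
    have hne : 1 ^^^ k ≠ 0 := fun h => hk (by rw [pg_xor_eq_iff] at h; simpa using h)
    exact fun h => pg_nim_not_le_zero hne ((pg_le_congr (pg_star_add_nim k) (pg_eq_refl 0)).1 h)
  · obtain ⟨k', hk', he⟩ := pg_nimN_moveRight k j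
    simp only [pg_addR_inr, he]
    exact pg_up_add_nim_not_le k'

theorem pg_zero_le_upup : (0 : PGame.{v}) ≤ up + up :=
  pg_le_trans pg_zero_le_up (pg_le_trans (pg_zero_add up).2 (pg_add_le_add_right pg_zero_le_up))

theorem pg_upup_add_nim_not_le (k : ℕ) : ¬ (up.{v} + up + nim.{v} k ≤ 0) := by
  rw [pg_not_le_zero_iff]
  by_cases hk : k = 1
  · subst hk
    obtain ⟨i, hi⟩ := pg_nimN_moveLeft_exists (show (0 : ℕ) < 1 by norm_num)
    refine ⟨pgToL (Sum.inr i), ?_⟩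
    simp only [pg_addL_inr, hi]
    exact pg_le_trans pg_zero_le_upup
      (pg_eq_trans (pg_add_congr_right pg_nim_zero) (pg_add_zero _)).2
  · refine ⟨pgToL (Sum.inl (pgToL (Sum.inl pgUpL))), ?_⟩
    simp only [pg_addL_inl]
    exact pg_le_trans (pg_up_add_nim_nonneg hk) (pg_add_congr_left (pg_zero_add up)).2

theorem pg_star_up_add_nim (k : ℕ) : PGEq ((star.{v} + up) + nim k) (up + nim ((1 ^^^ k : ℕ) : Ordinal)) :=
  pg_eq_trans (pg_add_congr_left (pg_add_comm star up))
    (pg_eq_trans (pg_add_assoc up star (nim k)) (pg_add_congr_right (pg_star_add_nim k)))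

theorem pg_up_star_add_nim (k : ℕ) : PGEq ((up.{v} + star) + nim k) (up + nim ((1 ^^^ k : ℕ) : Ordinal)) :=
  pg_eq_trans (pg_add_assoc up star (nim k)) (pg_add_congr_right (pg_star_add_nim k))

theorem pg_upup_add_nim_nonneg (k : ℕ) : 0 ≤ up.{v} + up + nim.{v} k := by
  rw [pg_zero_le_iff]
  intro j
  refine pg_rightMoves_add_cases j (fun j => ?_) (fun j => ?_)
  · simp only [pg_addR_inl]
    refine pg_rightMoves_add_cases j (fun u => ?_) (fun u => ?_)
    · simp only [pg_addR_inl]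
      exact fun h => pg_up_add_nim_not_le _ ((pg_le_congr (pg_star_up_add_nim k) (pg_eq_refl 0)).1 h)
    · simp only [pg_addR_inr]
      exact fun h => pg_up_add_nim_not_le _ ((pg_le_congr (pg_up_star_add_nim k) (pg_eq_refl 0)).1 h)
  · obtain ⟨k', hk', he⟩ := pg_nimN_moveRight k j
    simp only [pg_addR_inr, he]
    exact pg_upup_add_nim_not_le k'

theorem pg_nim_add_shuffle (a c : ℕ) (W : PGame.{v}) :
    PGEq ((nim a + W) + nim c) (W + nim ((a ^^^ c : ℕ) : Ordinal)) :=
  pg_eq_trans (pg_add_congr_left (pg_add_comm _ _))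
    (pg_eq_trans (pg_add_assoc _ _ _) (pg_add_congr_right (pg_nim_add_nim a c)))

theorem ordinalSum_def (G H : PGame.{u}) : ordinalSum G H =
    PGame.mk (G.LeftMoves ⊕ H.LeftMoves) (G.RightMoves ⊕ H.RightMoves)
      (Sum.elim G.moveLeft fun i => ordinalSum G (H.moveLeft i))
      (Sum.elim G.moveRight fun j => ordinalSum G (H.moveRight j)) := by
  rw [ordinalSum]

theorem pg_ordinalSum_moveRight_cases {n : ℕ} (x : Fin n → ℕ) (H : PGame)
    (j : (ordinalSum (superstar x) H).RightMoves) :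
    (∃ k, (ordinalSum (superstar x) H).moveRight j = nim (x k)) ∨
      ∃ j', (ordinalSum (superstar x) H).moveRight j = ordinalSum (superstar x) (H.moveRight j') := by
  have key : ∀ (g : PGame) (h : PGame.mk ((superstar x).LeftMoves ⊕ H.LeftMoves)
      ((superstar x).RightMoves ⊕ H.RightMoves)
      (Sum.elim (superstar x).moveLeft fun i => ordinalSum (superstar x) (H.moveLeft i))
      (Sum.elim (superstar x).moveRight fun j => ordinalSum (superstar x) (H.moveRight j)) = g)
      (j : g.RightMoves),
      (∃ k, g.moveRight j = nim (x k)) ∨ ∃ j', g.moveRight j = ordinalSum (superstar x) (H.moveRight j') := by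
    rintro g rfl (k | j')
    · exact Or.inl ⟨k, rfl⟩
    · exact Or.inr ⟨j', rfl⟩
  exact key _ (ordinalSum_def _ _).symm j

theorem pg_ordinalSum_moveLeft_exists {n : ℕ} (x : Fin n → ℕ) (H : PGame) (k : Fin n) :
    ∃ i, (ordinalSum (superstar x) H).moveLeft i = nim (x k) := by
  have key : ∀ (g : PGame), PGame.mk ((superstar x).LeftMoves ⊕ H.LeftMoves)
      ((superstar x).RightMoves ⊕ H.RightMoves)
      (Sum.elim (superstar x).moveLeft fun i => ordinalSum (superstar x) (H.moveLeft i))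
      (Sum.elim (superstar x).moveRight fun j => ordinalSum (superstar x) (H.moveRight j)) = g →
      ∃ i, g.moveLeft i = nim (x k) := by
    rintro g rfl
    exact ⟨Sum.inl k, rfl⟩
  exact key _ (ordinalSum_def _ _).symm

theorem key_zero_le (n : ℕ) (x : Fin n → ℕ) (i₀ : Fin n) (hi₀ : x i₀ = 0) {o : ℕ} (ho : o ≠ 0) :
    0 ≤ ordinalSum (superstar x) (-1) + (up + up) + nim (o : Ordinal) := by
  have F2 : ∀ (H : PGame) (c : ℕ),
      ¬ ((ordinalSum (superstar x) H + (up + up)) + nim (c : Ordinal) ≤ 0) := by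
    intro H c
    rw [pg_not_le_zero_iff]
    obtain ⟨i, hi⟩ := pg_ordinalSum_moveLeft_exists x H i₀
    refine ⟨pgToL (Sum.inl (pgToL (Sum.inl i))), ?_⟩
    simp only [pg_addL_inl, hi, hi₀]
    exact (pg_le_congr (pg_eq_refl 0) (pg_nim_add_shuffle 0 c _)).2 (pg_upup_add_nim_nonneg _)
  rw [pg_zero_le_iff]
  intro j
  refine pg_rightMoves_add_cases j (fun k => ?_) (fun k => ?_)
  · simp only [pg_addR_inl]
    refine pg_rightMoves_add_cases k (fun jS => ?_) (fun jW => ?_)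
    · simp only [pg_addR_inl]
      rcases pg_ordinalSum_moveRight_cases x (-1) jS with ⟨k, hk⟩ | ⟨j', hj'⟩
      · rw [hk]
        exact fun h => pg_upup_add_nim_not_le _
          ((pg_le_congr (pg_nim_add_shuffle _ o _) (pg_eq_refl 0)).1 h)
      · rw [hj']
        exact F2 _ o
    · simp only [pg_addR_inr]
      obtain ⟨i, hi⟩ := pg_ordinalSum_moveLeft_exists x (-1) i₀
      have F3 : ∀ V : PGame, PGEq (V + nim (o : Ordinal)) (up + nim ((1 ^^^ o : ℕ) : Ordinal)) →
          ¬ ((ordinalSum (superstar x) (-1) + V) + nim (o : Ordinal) ≤ 0) := by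
        intro V hV
        rw [pg_not_le_zero_iff]
        refine ⟨pgToL (Sum.inl (pgToL (Sum.inl i))), ?_⟩
        simp only [pg_addL_inl, hi, hi₀]
        refine (pg_le_congr (pg_eq_refl 0)
          (pg_eq_trans (pg_nim_add_shuffle 0 o V) ?_)).2 (pg_up_add_nim_nonneg (k := 1 ^^^ o) ?_)
        · rw [Nat.zero_xor]; exact hV
        · intro h; apply ho; have := pg_xor_eq_iff.1 h; simpa using this
      refine pg_rightMoves_add_cases jW (fun u => ?_) (fun u => ?_)
      · simp only [pg_addR_inl]
        exact F3 _ (pg_star_up_add_nim o)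
      · simp only [pg_addR_inr]
        exact F3 _ (pg_up_star_add_nim o)
  · obtain ⟨o', ho', he⟩ := pg_nimN_moveRight o k
    simp only [pg_addR_inr, he]
    exact F2 _ o'

end PGHelpers

/-- for a mutant flower of positive height, the game
`({*x₁,…,*xₙ}:(-1)) + ⇑ + *N` is strictly positive in normal play for all
sufficiently large `N` (larger than every `xᵢ` and than `mex{xᵢ}`). -/
theorem mutantFlower_conj_up_up_nim_pos (n : ℕ) (x : Fin n → ℕ)
    (hx : 0 < setMex (Set.range x)) (N : ℕ)
    (hN₁ : ∀ i, x i < N) (hN₂ : setMex (Set.range x) < N) :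
    0 < ordinalSum (superstar x) (-1) + (up + up) + nim (N : Ordinal) := by
  -- `0 ∈ range x` since the mex is positive
  obtain ⟨i₀, hi₀⟩ : ∃ i, x i = 0 := by
    by_contra hc
    push_neg at hc
    have h0 : (0 : ℕ) ∈ {m | m ∉ Set.range x} := by
      intro ⟨i, hi⟩
      exact hc i hi
    have := Nat.sInf_le h0
    simp only [setMex] at hx
    omega
  have hm : 0 < N := lt_trans hx hN₂
  show 0 ≤ _ ∧ ¬ _ ≤ 0
  refine ⟨key_zero_le n x i₀ hi₀ hm.ne', ?_⟩
  rw [pg_not_le_zero_iff]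
  obtain ⟨i, hi⟩ := pg_nimN_moveLeft_exists hN₂
  refine ⟨pgToL (Sum.inr i), ?_⟩
  simp only [pg_addL_inr, hi]
  exact key_zero_le n x i₀ hi₀ hx.ne'
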